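/- Let (T_n) be a sequence where T_n is an invertible n×n real matrix with positive entries satisfying t_{i,i} ≥ Σ_{j≠i} t_{i,j} for every row, with associated quantities m_n, M_n and diagonal matrix S_n with (S_n)_{i,i} = 1/(T_n)_{i,i}. If M_n/(m_n n) → 0 as n → ∞, then there exist a constant K > 0 and N such that for all n ≥ N, max_{i,j} |(T_n^{-1} − S_n)_{i,j}| ≤ K · M_n² / (m_n³ n²). -/

import Mathlib

/-!
Write `S = D⁻¹` for the inverse of the diagonal part `D` of `T` and `W = D⁻¹T - 1`. Then
`X = T⁻¹ - S` satisfies `X + W X = S - S T S`, so each column `x` of `X` solves `x + W x = e` where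
`W ≥ 0` has row sums `≤ 1` and off-diagonal entries `≥ m / (n M)` (as `t i i ≤ n M`), and
`|e| ≤ η = M / ((n - 1) m)²`.

For such a system, looking at the row of a minimal coordinate shows `min x ≤ η`, and symmetrically
`-η ≤ max x`, so `|x| ≤ η + ω` with `ω = max x - min x`. Subtracting the rows `A`, `B` of a maximal
and a minimal coordinate, the weight `∑ j, min (W A j) (W B j) ≥ (n - 2) m / (n M)` that the two
rows share is multiplied by `ω`, which gives `(n - 2) (m / (n M)) ω ≤ 4 η`.
-/

open Finset Matrix

section JacobiSystem

variable {ι : Type*} [Fintype ι] {w : Matrix ι ι ℝ} {x e : ι → ℝ} {η : ℝ}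

lemma le_of_forall_le_of_jacobi (hw : ∀ i j, 0 ≤ w i j)
    (hsys : ∀ i, x i + ∑ j, w i j * x j = e i) (he : ∀ i, |e i| ≤ η)
    {B : ι} (hB : ∀ j, x B ≤ x j) : x B ≤ η := by
  by_contra! h
  have hxB : 0 < x B := ((abs_nonneg _).trans (he B)).trans_lt h
  have : 0 ≤ ∑ j, w B j * x j :=
    sum_nonneg fun j _ => mul_nonneg (hw B j) (hxB.le.trans (hB j))
  linarith [hsys B, le_abs_self (e B), he B]

lemma neg_le_of_forall_le_of_jacobi (hw : ∀ i j, 0 ≤ w i j)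
    (hsys : ∀ i, x i + ∑ j, w i j * x j = e i) (he : ∀ i, |e i| ≤ η)
    {A : ι} (hA : ∀ j, x j ≤ x A) : -η ≤ x A := by
  have hsys' : ∀ i, -x i + ∑ j, w i j * -x j = -e i := fun i => by
    simp only [mul_neg, sum_neg_distrib]; linarith [hsys i]
  have := le_of_forall_le_of_jacobi (e := -e) hw hsys' (fun i => by simpa using he i)
    (B := A) fun j => neg_le_neg (hA j)
  linarith

lemma sum_min_mul_sub_le_of_jacobi (hw : ∀ i j, 0 ≤ w i j) (hrow : ∀ i, ∑ j, w i j ≤ 1)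
    (hsys : ∀ i, x i + ∑ j, w i j * x j = e i) (he : ∀ i, |e i| ≤ η)
    {A B : ι} (hA : ∀ j, x j ≤ x A) (hB : ∀ j, x B ≤ x j) :
    (∑ j, min (w A j) (w B j)) * (x A - x B) ≤ 4 * η := by
  set r := fun j => min (w A j) (w B j)
  have hB' : ∑ j, (w B j - r j) * x j ≤ (∑ j, (w B j - r j)) * x A := by
    rw [sum_mul]
    exact sum_le_sum fun j _ => mul_le_mul_of_nonneg_left (hA j) (sub_nonneg.2 (min_le_right _ _))
  have hA' : (∑ j, (w A j - r j)) * x B ≤ ∑ j, (w A j - r j) * x j := by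
    rw [sum_mul]
    exact sum_le_sum fun j _ => mul_le_mul_of_nonneg_left (hB j) (sub_nonneg.2 (min_le_left _ _))
  simp only [sub_mul, sum_sub_distrib] at hA' hB'
  have hq := le_of_forall_le_of_jacobi hw hsys he hB
  have hp := neg_le_of_forall_le_of_jacobi hw hsys he hA
  have hη : 0 ≤ η := (abs_nonneg _).trans (he A)
  have hU : 0 ≤ ∑ j, w A j := sum_nonneg fun j _ => hw A j
  have hV : 0 ≤ ∑ j, w B j := sum_nonneg fun j _ => hw B j
  have heA := (abs_le.1 (he A)).2
  have heB := (abs_le.1 (he B)).1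
  linarith [hsys A, hsys B, mul_nonneg (sub_nonneg.2 (hrow B)) (neg_le_iff_add_nonneg.1 hp),
    mul_nonneg (sub_nonneg.2 (hrow A)) (sub_nonneg.2 hq), mul_nonneg hU hη, mul_nonneg hV hη]

lemma card_sub_two_mul_le_sum_min [DecidableEq ι] {c : ℝ} (hc : 0 ≤ c) (hw : ∀ i j, 0 ≤ w i j)
    (hwc : ∀ i j, i ≠ j → c ≤ w i j) (A B : ι) :
    ((Fintype.card ι : ℝ) - 2) * c ≤ ∑ j, min (w A j) (w B j) := by
  set S := univ \ {A, B}
  have hS : (Fintype.card ι : ℝ) - 2 ≤ #S := by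
    have h1 : Fintype.card ι ≤ #S + #{A, B} := card_le_card_sdiff_add_card
    have h2 : #{A, B} ≤ 2 := card_le_two
    have : Fintype.card ι ≤ #S + 2 := by omega
    have : (Fintype.card ι : ℝ) ≤ #S + 2 := by exact_mod_cast this
    linarith
  calc ((Fintype.card ι : ℝ) - 2) * c ≤ ∑ _j ∈ S, c := by
        rw [sum_const, nsmul_eq_mul]; exact mul_le_mul_of_nonneg_right hS hc
    _ ≤ ∑ j ∈ S, min (w A j) (w B j) := sum_le_sum fun j hj => by
        simp only [S, mem_sdiff, mem_insert, mem_singleton, not_or, mem_univ, true_and] at hj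
        exact le_min (hwc A j (Ne.symm hj.1)) (hwc B j (Ne.symm hj.2))
    _ ≤ ∑ j, min (w A j) (w B j) :=
        sum_le_sum_of_subset_of_nonneg (subset_univ _) fun j _ _ => le_min (hw A j) (hw B j)

theorem abs_le_of_jacobi [DecidableEq ι] {c : ℝ} (hc : 0 < c) (hcard : 2 < Fintype.card ι)
    (hw : ∀ i j, 0 ≤ w i j) (hwc : ∀ i j, i ≠ j → c ≤ w i j) (hrow : ∀ i, ∑ j, w i j ≤ 1)
    (hsys : ∀ i, x i + ∑ j, w i j * x j = e i) (he : ∀ i, |e i| ≤ η) (i : ι) :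
    |x i| ≤ η + 4 * η / ((Fintype.card ι - 2) * c) := by
  have : Nonempty ι := Fintype.card_pos_iff.1 (by omega)
  obtain ⟨A, -, hA⟩ := exists_max_image univ x univ_nonempty
  obtain ⟨B, -, hB⟩ := exists_min_image univ x univ_nonempty
  replace hA : ∀ j, x j ≤ x A := fun j => hA j (mem_univ j)
  replace hB : ∀ j, x B ≤ x j := fun j => hB j (mem_univ j)
  have hd : 0 < ((Fintype.card ι : ℝ) - 2) * c := mul_pos (by
    have : (2 : ℝ) < Fintype.card ι := by exact_mod_cast hcard
    linarith) hc
  have hosc : x A - x B ≤ 4 * η / ((Fintype.card ι - 2) * c) := by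
    rw [le_div_iff₀ hd, mul_comm]
    exact (mul_le_mul_of_nonneg_right (card_sub_two_mul_le_sum_min hc.le hw hwc A B)
      (sub_nonneg.2 (hA B))).trans (sum_min_mul_sub_le_of_jacobi hw hrow hsys he hA hB)
  have hq := le_of_forall_le_of_jacobi hw hsys he hB
  have hp := neg_le_of_forall_le_of_jacobi hw hsys he hA
  rw [abs_le]
  constructor <;> linarith [hA i, hB i]

end JacobiSystem

lemma jacobi_estimate_le {n m M : ℝ} (hn : 4 ≤ n) (hm : 0 < m) (hmM : m ≤ M) :
    M / ((n - 1) * m) ^ 2 + 4 * (M / ((n - 1) * m) ^ 2) / ((n - 2) * (m / (n * M))) ≤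
      36 * M ^ 2 / (m ^ 3 * n ^ 2) := by
  have hM : 0 < M := hm.trans_le hmM
  have hn1 : 0 < n - 1 := by linarith
  have hn2 : 0 < n - 2 := by linarith
  set η := M / ((n - 1) * m) ^ 2
  have hη : η ≤ 4 * M / (m ^ 2 * n ^ 2) := by
    rw [div_le_div_iff₀ (by positivity) (by positivity)]
    nlinarith [mul_le_mul_of_nonneg_left (by nlinarith : n ^ 2 ≤ 4 * (n - 1) ^ 2)
      (by positivity : 0 ≤ M * m ^ 2)]
  have hη0 : 0 ≤ η := by positivity
  have hterm : 4 * η / ((n - 2) * (m / (n * M))) ≤ 8 * η * (M / m) := by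
    rw [div_le_iff₀ (by positivity)]
    have : n * (m / (n * M)) * (M / m) = 1 := by field_simp
    nlinarith [mul_nonneg hη0 (by linarith : 0 ≤ n - 4)]
  calc η + 4 * η / ((n - 2) * (m / (n * M))) ≤ η * (M / m) + 8 * η * (M / m) := by
        gcongr
        · exact le_mul_of_one_le_right hη0 ((one_le_div hm).2 hmM)
    _ = 9 * η * (M / m) := by ring
    _ ≤ 9 * (4 * M / (m ^ 2 * n ^ 2)) * (M / m) := by gcongr
    _ = 36 * M ^ 2 / (m ^ 3 * n ^ 2) := by field_simp; ring

section DiagonallyDominant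

variable {ι : Type*} [Fintype ι] [DecidableEq ι] {t : Matrix ι ι ℝ} {m M : ℝ}

noncomputable def jacobiWeights (t : Matrix ι ι ℝ) : Matrix ι ι ℝ :=
  diagonal (fun i => (t i i)⁻¹) * t - 1

lemma jacobiWeights_apply (t : Matrix ι ι ℝ) (i j : ι) :
    jacobiWeights t i j = t i j / t i i - (1 : Matrix ι ι ℝ) i j := by
  simp [jacobiWeights, diagonal_mul, div_eq_inv_mul]

lemma card_sub_one_mul_le_diag (hlo : ∀ i j, i ≠ j → m ≤ t i j)
    (hdom : ∀ i, ∑ j ∈ univ.erase i, t i j ≤ t i i) (i : ι) :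
    ((Fintype.card ι : ℝ) - 1) * m ≤ t i i := by
  have hsum : ∑ _j ∈ univ.erase i, m ≤ ∑ j ∈ univ.erase i, t i j :=
    sum_le_sum fun j hj => hlo i j (ne_of_mem_erase hj).symm
  rw [sum_const, card_erase_of_mem (mem_univ i), card_univ, nsmul_eq_mul,
    Nat.cast_pred (Fintype.card_pos_iff.2 ⟨i⟩)] at hsum
  exact hsum.trans (hdom i)

lemma diag_le_card_mul (hhi : ∀ i j, i ≠ j → t i j ≤ M)
    (hup : ∀ i, t i i ≤ ∑ j ∈ univ.erase i, t i j + M) (i : ι) :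
    t i i ≤ Fintype.card ι * M := by
  have hsum : ∑ j ∈ univ.erase i, t i j ≤ ∑ _j ∈ univ.erase i, M :=
    sum_le_sum fun j hj => hhi i j (ne_of_mem_erase hj).symm
  rw [sum_const, card_erase_of_mem (mem_univ i), card_univ, nsmul_eq_mul,
    Nat.cast_pred (Fintype.card_pos_iff.2 ⟨i⟩)] at hsum
  linarith [hup i]

lemma jacobiWeights_nonneg (hdiag : ∀ i, 0 < t i i) (hoff : ∀ i j, i ≠ j → 0 ≤ t i j)
    (i j : ι) : 0 ≤ jacobiWeights t i j := by
  rw [jacobiWeights_apply]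
  rcases eq_or_ne i j with rfl | hij
  · simp [(hdiag i).ne']
  · simpa [one_apply_ne hij] using div_nonneg (hoff i j hij) (hdiag i).le

lemma div_le_jacobiWeights (hlo : ∀ i j, i ≠ j → m ≤ t i j) (hm : 0 ≤ m)
    (hdiag : ∀ i, 0 < t i i) (hle : ∀ i, t i i ≤ M) {i j : ι} (hij : i ≠ j) :
    m / M ≤ jacobiWeights t i j := by
  rw [jacobiWeights_apply, one_apply_ne hij, sub_zero]
  exact div_le_div₀ (hm.trans (hlo i j hij)) (hlo i j hij) (hdiag i) (hle i)

lemma sum_jacobiWeights_le_one (hdiag : ∀ i, 0 < t i i)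
    (hdom : ∀ i, ∑ j ∈ univ.erase i, t i j ≤ t i i) (i : ι) :
    ∑ j, jacobiWeights t i j ≤ 1 := by
  simp only [jacobiWeights_apply, sum_sub_distrib, ← sum_div, one_apply, sum_ite_eq, mem_univ,
    if_true, sub_le_iff_le_add, div_le_iff₀ (hdiag i)]
  linarith [hdom i, add_sum_erase univ (t i) (mem_univ i)]

lemma inv_sub_add_jacobiWeights_mul (ht : IsUnit t.det) :
    letI S := diagonal fun i => (t i i)⁻¹
    t⁻¹ - S + jacobiWeights t * (t⁻¹ - S) = S - S * t * S := by
  simp only [jacobiWeights, sub_mul, Matrix.one_mul, Matrix.mul_sub, Matrix.mul_assoc,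
    mul_nonsing_inv _ ht, Matrix.mul_one]
  abel

lemma abs_diagonal_inv_sub_mul_apply_le {d : ℝ} (hd : 0 < d) (hdiag : ∀ i, d ≤ t i i)
    (hoff : ∀ i j, i ≠ j → 0 ≤ t i j) (hhi : ∀ i j, i ≠ j → t i j ≤ M) (hM : 0 ≤ M) (i k : ι) :
    letI S := diagonal fun i => (t i i)⁻¹
    |(S - S * t * S) i k| ≤ M / d ^ 2 := by
  have hpos i : 0 < t i i := hd.trans_le (hdiag i)
  rcases eq_or_ne i k with rfl | hik
  · simp [diagonal_mul, mul_diagonal, (hpos i).ne']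
    positivity
  · have : (t i i)⁻¹ * t i k * (t k k)⁻¹ = t i k / (t i i * t k k) := by field_simp
    rw [Matrix.sub_apply, diagonal_apply_ne _ hik, mul_diagonal, diagonal_mul, zero_sub, abs_neg,
      this, abs_of_nonneg (div_nonneg (hoff i k hik) (mul_pos (hpos i) (hpos k)).le), sq]
    exact div_le_div₀ hM (hhi i k hik) (mul_pos hd hd)
      (mul_le_mul (hdiag i) (hdiag k) hd.le (hpos i).le)

theorem abs_inv_sub_diagonal_inv_apply_le (hcard : 4 ≤ Fintype.card ι) (hm : 0 < m)
    (ht : IsUnit t.det) (hlo : ∀ i j, i ≠ j → m ≤ t i j) (hhi : ∀ i j, i ≠ j → t i j ≤ M)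
    (hdom : ∀ i, ∑ j ∈ univ.erase i, t i j ≤ t i i)
    (hup : ∀ i, t i i ≤ ∑ j ∈ univ.erase i, t i j + M) (i k : ι) :
    |(t⁻¹ - diagonal fun l => (t l l)⁻¹) i k| ≤
      36 * M ^ 2 / (m ^ 3 * (Fintype.card ι : ℝ) ^ 2) := by
  have hn : (4 : ℝ) ≤ Fintype.card ι := by exact_mod_cast hcard
  obtain ⟨a, b, hab⟩ := Fintype.exists_pair_of_one_lt_card (by omega : 1 < Fintype.card ι)
  have hmM : m ≤ M := (hlo a b hab).trans (hhi a b hab)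
  have hM : 0 < M := hm.trans_le hmM
  have hd : 0 < ((Fintype.card ι : ℝ) - 1) * m := mul_pos (by linarith) hm
  have hdiag := card_sub_one_mul_le_diag hlo hdom
  have hpos i : 0 < t i i := hd.trans_le (hdiag i)
  have hoff i j (h : i ≠ j) : 0 ≤ t i j := hm.le.trans (hlo i j h)
  have hsys := inv_sub_add_jacobiWeights_mul ht
  refine (abs_le_of_jacobi (x := fun l => (t⁻¹ - diagonal fun l => (t l l)⁻¹) l k)
    (by positivity) (by omega) (jacobiWeights_nonneg hpos hoff)
    (fun i j h => div_le_jacobiWeights hlo hm.le hpos (diag_le_card_mul hhi hup) h)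
    (sum_jacobiWeights_le_one hpos hdom) (fun l => ?_)
    (fun l => abs_diagonal_inv_sub_mul_apply_le hd hdiag hoff hhi hM.le l k) i).trans
    (jacobi_estimate_le hn hm hmM)
  simpa [mul_apply] using congrFun (congrFun hsys l) k

end DiagonallyDominant

theorem stmt_1_general (T : (n : ℕ) → Matrix (Fin n) (Fin n) ℝ)
    (m M : ℕ → ℝ) (Δ : (n : ℕ) → Fin n → ℝ)
    (hinv : ∀ n, 2 ≤ n → IsUnit (T n).det)
    (hpos : ∀ n, 2 ≤ n → ∀ i j, 0 < T n i j)
    (hdom : ∀ n, 2 ≤ n → ∀ i, ∑ j ∈ Finset.univ.erase i, T n i j ≤ T n i i)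
    (hΔ : ∀ n, ∀ i : Fin n, Δ n i = T n i i - ∑ j ∈ Finset.univ.erase i, T n i j)
    (hm1 : ∀ n, 2 ≤ n → ∀ i j : Fin n, i ≠ j → m n ≤ T n i j)
    (hm2 : ∀ n, 2 ≤ n → ∃ i j : Fin n, i ≠ j ∧ T n i j = m n)
    (hM1 : ∀ n, 2 ≤ n → ∀ i j : Fin n, i ≠ j → T n i j ≤ M n)
    (hM2 : ∀ n, 2 ≤ n → ∀ i : Fin n, Δ n i ≤ M n) :
    ∃ K : ℝ, 0 < K ∧ ∃ N : ℕ, ∀ n, N ≤ n → ∀ i j : Fin n,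
      |((T n)⁻¹ - Matrix.diagonal fun k => (T n k k)⁻¹) i j| ≤
        K * (M n) ^ 2 / ((m n) ^ 3 * (n : ℝ) ^ 2) := by
  refine ⟨36, by norm_num, 4, fun n hn i j => ?_⟩
  have h2 : 2 ≤ n := by omega
  obtain ⟨a, b, -, hmab⟩ := hm2 n h2
  have hup i : T n i i ≤ ∑ j ∈ univ.erase i, T n i j + M n := by
    linarith [hΔ n i, hM2 n h2 i]
  simpa using abs_inv_sub_diagonal_inv_apply_le (by simpa using hn) (hmab ▸ hpos n h2 a b)
    (hinv n h2) (hm1 n h2) (hM1 n h2) (hdom n h2) hup i j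

theorem stmt_1 (T : (n : ℕ) → Matrix (Fin n) (Fin n) ℝ)
    (m M : ℕ → ℝ) (Δ : (n : ℕ) → Fin n → ℝ)
    (hinv : ∀ n, 2 ≤ n → IsUnit (T n).det)
    (hpos : ∀ n, 2 ≤ n → ∀ i j, 0 < T n i j)
    (hdom : ∀ n, 2 ≤ n → ∀ i, ∑ j ∈ Finset.univ.erase i, T n i j ≤ T n i i)
    (hΔ : ∀ n, ∀ i : Fin n, Δ n i = T n i i - ∑ j ∈ Finset.univ.erase i, T n i j)
    (hm1 : ∀ n, 2 ≤ n → ∀ i j : Fin n, i ≠ j → m n ≤ T n i j)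
    (hm2 : ∀ n, 2 ≤ n → ∃ i j : Fin n, i ≠ j ∧ T n i j = m n)
    (hM1 : ∀ n, 2 ≤ n → ∀ i j : Fin n, i ≠ j → T n i j ≤ M n)
    (hM2 : ∀ n, 2 ≤ n → ∀ i : Fin n, Δ n i ≤ M n)
    (hM3 : ∀ n, 2 ≤ n →
      ((∃ i j : Fin n, i ≠ j ∧ T n i j = M n) ∨ (∃ i : Fin n, Δ n i = M n)))
    (hlim : Filter.Tendsto (fun n : ℕ => M n / (m n * (n : ℝ))) Filter.atTop (nhds 0)) :
    ∃ K : ℝ, 0 < K ∧ ∃ N : ℕ, ∀ n, N ≤ n → ∀ i j : Fin n,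
      |((T n)⁻¹ - Matrix.diagonal fun k => (T n k k)⁻¹) i j| ≤
        K * (M n) ^ 2 / ((m n) ^ 3 * (n : ℝ) ^ 2) :=
  stmt_1_general T m M Δ hinv hpos hdom hΔ hm1 hm2 hM1 hM2
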